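/- arXiv:1408.5630 — 3 statements merged into one kernel-verified Lean document; each statement's English description precedes it below -/
import Mathlib

section
/- With notation as before (λ > 0), the total eigencurrent across a cut (S', S'') is maximized over all partitions S = S' ∪̇ S'' when S' = S_+ := {i : φ_i ≥ 0} and S'' = S_- := {i : φ_i < 0}; i.e., for every partition, ∑_{i∈S', j∈S''} F_{ij} ≤ ∑_{i∈S_+, j∈S_-} F_{ij} = λ ∑_{i∈S_+} π_i φ_i. -/
/-!
Detailed balance makes the eigencurrent antisymmetric, so the current inside any block `S'` cancels
and the current leaving `S'` equals the total outflow of its vertices. By `∑ⱼ L i j = 0` and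
`L φ = -λ φ` the outflow of vertex `i` is `λ π i φ i`, so the cut current is `λ ∑_{i ∈ S'} π i φ i`,
which is largest when `S'` collects exactly the vertices with `φ i ≥ 0`.
-/

section Antisymmetric

variable {ι : Type*} {F : ι → ι → ℝ}

theorem Finset.sum_sum_eq_zero_of_antisymm (hF : ∀ i j, F j i = -F i j) (s : Finset ι) :
    ∑ i ∈ s, ∑ j ∈ s, F i j = 0 := by
  have hneg : ∑ i ∈ s, ∑ j ∈ s, F i j = ∑ i ∈ s, ∑ j ∈ s, -F i j := by
    rw [Finset.sum_comm]
    exact Finset.sum_congr rfl fun i _ => Finset.sum_congr rfl fun j _ => hF i j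
  simp only [Finset.sum_neg_distrib] at hneg
  linarith

theorem Finset.sum_sum_compl_eq_of_antisymm [Fintype ι] [DecidableEq ι]
    (hF : ∀ i j, F j i = -F i j) (s : Finset ι) :
    ∑ i ∈ s, ∑ j ∈ sᶜ, F i j = ∑ i ∈ s, ∑ j, F i j := by
  simp only [← Finset.sum_add_sum_compl s, Finset.sum_add_distrib,
    Finset.sum_sum_eq_zero_of_antisymm hF s, zero_add]

end Antisymmetric

theorem Finset.sum_le_sum_filter_of_nonneg_of_nonpos {ι : Type*} [Fintype ι] {p : ι → Prop}
    [DecidablePred p] {g : ι → ℝ} (hpos : ∀ i, p i → 0 ≤ g i) (hneg : ∀ i, ¬p i → g i ≤ 0)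
    (s : Finset ι) : ∑ i ∈ s, g i ≤ ∑ i with p i, g i := by
  calc ∑ i ∈ s, g i
      = ∑ i ∈ s with p i, g i + ∑ i ∈ s with ¬p i, g i :=
        (Finset.sum_filter_add_sum_filter_not s p g).symm
    _ ≤ ∑ i ∈ s with p i, g i :=
        add_le_of_nonpos_right (Finset.sum_nonpos fun i hi => hneg i (Finset.mem_filter.1 hi).2)
    _ ≤ ∑ i with p i, g i :=
        Finset.sum_le_sum_of_subset_of_nonneg (Finset.filter_subset_filter p (Finset.subset_univ s))
          fun i hi _ => hpos i (Finset.mem_filter.1 hi).2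

section Eigencurrent

variable {ι : Type*} {L : Matrix ι ι ℝ} {π φ : ι → ℝ} {lam : ℝ}

def eigencurrent (π : ι → ℝ) (L : Matrix ι ι ℝ) (φ : ι → ℝ) (i j : ι) : ℝ :=
  π i * L i j * (φ i - φ j)

theorem eigencurrent_self (i : ι) : eigencurrent π L φ i i = 0 := by
  simp [eigencurrent]

theorem eigencurrent_antisymm (hdb : ∀ i j, π i * L i j = π j * L j i) (i j : ι) :
    eigencurrent π L φ j i = -eigencurrent π L φ i j := by
  rw [eigencurrent, eigencurrent, ← hdb]
  ring

variable [Fintype ι]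

theorem sum_eigencurrent (hrow : ∀ i, ∑ j, L i j = 0) (heig : L.mulVec φ = (-lam) • φ) (i : ι) :
    ∑ j, eigencurrent π L φ i j = lam * (π i * φ i) := by
  have hLφ : ∑ j, L i j * φ j = -lam * φ i := by
    simpa [Matrix.mulVec, dotProduct] using congrFun heig i
  calc ∑ j, eigencurrent π L φ i j = π i * φ i * ∑ j, L i j - π i * ∑ j, L i j * φ j := by
        simp only [eigencurrent, Finset.mul_sum, ← Finset.sum_sub_distrib]
        exact Finset.sum_congr rfl fun j _ => by ring
    _ = lam * (π i * φ i) := by rw [hrow, hLφ]; ring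

theorem sum_eigencurrent_compl [DecidableEq ι] (hdb : ∀ i j, π i * L i j = π j * L j i)
    (hrow : ∀ i, ∑ j, L i j = 0) (heig : L.mulVec φ = (-lam) • φ) (s : Finset ι) :
    ∑ i ∈ s, ∑ j ∈ sᶜ, eigencurrent π L φ i j = lam * ∑ i ∈ s, π i * φ i := by
  rw [Finset.sum_sum_compl_eq_of_antisymm (eigencurrent_antisymm hdb), Finset.mul_sum]
  exact Finset.sum_congr rfl fun i _ => sum_eigencurrent hrow heig i

end Eigencurrent

theorem eigencurrent_emission_absorption_cut_maximal_general
    (N : ℕ) (L : Matrix (Fin N) (Fin N) ℝ) (π : Fin N → ℝ)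
    (hπpos : ∀ i, 0 < π i)
    (hrow : ∀ i, ∑ j, L i j = 0)
    (hdb : ∀ i j, π i * L i j = π j * L j i)
    (lam : ℝ) (hlam : 0 < lam) (φ : Fin N → ℝ)
    (heig : L.mulVec φ = (-lam) • φ)
    (F : Fin N → Fin N → ℝ)
    (hF : ∀ i j, F i j = if i = j then 0 else π i * L i j * (φ i - φ j))
    (Splus Sminus : Finset (Fin N))
    (hplus : Splus = Finset.univ.filter (fun i => 0 ≤ φ i))
    (hminus : Sminus = Finset.univ.filter (fun i => φ i < 0)) :
    (∀ S' S'' : Finset (Fin N), Disjoint S' S'' → S' ∪ S'' = Finset.univ →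
      ∑ i ∈ S', ∑ j ∈ S'', F i j ≤ ∑ i ∈ Splus, ∑ j ∈ Sminus, F i j) ∧
    ∑ i ∈ Splus, ∑ j ∈ Sminus, F i j = lam * ∑ i ∈ Splus, π i * φ i := by
  obtain rfl : F = eigencurrent π L φ := by
    ext i j
    rw [hF]
    split_ifs with h
    · subst h
      exact (eigencurrent_self i).symm
    · rfl
  obtain rfl : Sminus = Splusᶜ := by
    ext i
    simp [hplus, hminus]
  have hcut := sum_eigencurrent_compl (lam := lam) hdb hrow heig
  refine ⟨fun S' S'' hdisj hcover => ?_, hcut Splus⟩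
  obtain rfl : S'ᶜ = S'' := (isCompl_iff.2 ⟨hdisj, codisjoint_iff.2 hcover⟩).compl_eq
  rw [hcut, hcut, hplus]
  refine mul_le_mul_of_nonneg_left ?_ hlam.le
  exact Finset.sum_le_sum_filter_of_nonneg_of_nonpos
    (fun i hi => mul_nonneg (hπpos i).le hi)
    (fun i hi => mul_nonpos_of_nonneg_of_nonpos (hπpos i).le (not_le.1 hi).le) S'

/-- The total eigencurrent across a cut `(S', S'')` is maximized when
`S' = S₊ = {i : φ i ≥ 0}` and `S'' = S₋ = {i : φ i < 0}`; its maximal value equals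
`λ ∑_{i ∈ S₊} π i * φ i`. -/
theorem eigencurrent_emission_absorption_cut_maximal
    (N : ℕ) (L : Matrix (Fin N) (Fin N) ℝ) (π : Fin N → ℝ)
    (hπpos : ∀ i, 0 < π i) (hπsum : ∑ i, π i = 1)
    (hoff : ∀ i j, i ≠ j → 0 ≤ L i j)
    (hrow : ∀ i, ∑ j, L i j = 0)
    (hdb : ∀ i j, π i * L i j = π j * L j i)
    (lam : ℝ) (hlam : 0 < lam) (φ : Fin N → ℝ)
    (heig : L.mulVec φ = (-lam) • φ)
    (F : Fin N → Fin N → ℝ)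
    (hF : ∀ i j, F i j = if i = j then 0 else π i * L i j * (φ i - φ j))
    (Splus Sminus : Finset (Fin N))
    (hplus : Splus = Finset.univ.filter (fun i => 0 ≤ φ i))
    (hminus : Sminus = Finset.univ.filter (fun i => φ i < 0)) :
    (∀ S' S'' : Finset (Fin N), Disjoint S' S'' → S' ∪ S'' = Finset.univ →
      ∑ i ∈ S', ∑ j ∈ S'', F i j ≤ ∑ i ∈ Splus, ∑ j ∈ Sminus, F i j) ∧
    ∑ i ∈ Splus, ∑ j ∈ Sminus, F i j = lam * ∑ i ∈ Splus, π i * φ i :=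
  eigencurrent_emission_absorption_cut_maximal_general N L π hπpos hrow hdb lam hlam φ heig F hF
    Splus Sminus hplus hminus
end

section
/- With notation as in the committor setting, the total reactive current across any cut separating A from B is the same: if S = S' ∪̇ S'' with A ⊆ S' and B ⊆ S'', then ∑_{i∈S', j∈S''} F^R_{ij} = ∑_{i∈A, j∉A} F^R_{ij}. -/
/-- The total reactive current across any cut separating `A` from `B` is the same:
if `S' ∪̇ S'' = S` with `A ⊆ S'` and `B ⊆ S''`, the current through the cut equals
the current emitted by `A`. -/
theorem reactive_current_cut_invariant
    (N : ℕ) (L : Matrix (Fin N) (Fin N) ℝ) (π : Fin N → ℝ)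
    (hπpos : ∀ i, 0 < π i) (hπsum : ∑ i, π i = 1)
    (hoff : ∀ i j, i ≠ j → 0 ≤ L i j)
    (hrow : ∀ i, ∑ j, L i j = 0)
    (hdb : ∀ i j, π i * L i j = π j * L j i)
    (A B : Finset (Fin N)) (hA : A.Nonempty) (hB : B.Nonempty)
    (hAB : Disjoint A B)
    (q : Fin N → ℝ)
    (hqA : ∀ i ∈ A, q i = 0) (hqB : ∀ i ∈ B, q i = 1)
    (hharm : ∀ i, i ∉ A → i ∉ B → ∑ j, L i j * q j = 0)
    (F : Fin N → Fin N → ℝ)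
    (hF : ∀ i j, F i j = π i * L i j * (q j - q i))
    (S' S'' : Finset (Fin N)) (hdisj : Disjoint S' S'')
    (hunion : S' ∪ S'' = Finset.univ)
    (hAS : A ⊆ S') (hBS : B ⊆ S'') :
    ∑ i ∈ S', ∑ j ∈ S'', F i j = ∑ i ∈ A, ∑ j ∈ Aᶜ, F i j := by
  -- antisymmetry of F
  have hanti : ∀ i j, F j i = - F i j := by
    intro i j
    rw [hF, hF, ← hdb]
    ring
  -- block sums over a symmetric block vanish
  have hblock : ∀ T : Finset (Fin N), ∑ i ∈ T, ∑ j ∈ T, F i j = 0 := by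
    intro T
    have h1 : ∑ i ∈ T, ∑ j ∈ T, F i j = ∑ i ∈ T, ∑ j ∈ T, F j i := Finset.sum_comm
    have h2 : ∑ i ∈ T, ∑ j ∈ T, F j i = ∑ i ∈ T, ∑ j ∈ T, (- F i j) :=
      Finset.sum_congr rfl fun i _ => Finset.sum_congr rfl fun j _ => hanti i j
    simp only [Finset.sum_neg_distrib] at h2
    linarith [h1, h2]
  -- divergence vanishes off A ∪ B
  have hdiv : ∀ i, i ∉ A → i ∉ B → ∑ j, F i j = 0 := by
    intro i hiA hiB
    have : ∑ j, F i j = π i * (∑ j, L i j * q j) - π i * q i * (∑ j, L i j) := by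
      rw [Finset.mul_sum, Finset.mul_sum, ← Finset.sum_sub_distrib]
      refine Finset.sum_congr rfl fun j _ => ?_
      rw [hF]; ring
    rw [this, hharm i hiA hiB, hrow i]
    ring
  -- both sides equal ∑ i ∈ A, ∑ j, F i j
  have hLHS : ∑ i ∈ S', ∑ j ∈ S'', F i j = ∑ i ∈ S', ∑ j, F i j := by
    have : ∀ i, ∑ j, F i j = ∑ j ∈ S', F i j + ∑ j ∈ S'', F i j := by
      intro i
      rw [← Finset.sum_union hdisj, hunion]
    simp_rw [this, Finset.sum_add_distrib, hblock S']
    ring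
  have hRHS : ∑ i ∈ A, ∑ j ∈ Aᶜ, F i j = ∑ i ∈ A, ∑ j, F i j := by
    have : ∀ i, ∑ j, F i j = ∑ j ∈ A, F i j + ∑ j ∈ Aᶜ, F i j := by
      intro i
      rw [Finset.sum_add_sum_compl]
    simp_rw [this, Finset.sum_add_distrib, hblock A]
    ring
  have hshrink : ∑ i ∈ S', ∑ j, F i j = ∑ i ∈ A, ∑ j, F i j := by
    refine (Finset.sum_subset hAS fun i hiS hiA => ?_).symm
    have hiB : i ∉ B := fun hiB => (Finset.disjoint_left.mp hdisj hiS) (hBS hiB)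
    exact hdiv i hiA hiB
  rw [hLHS, hRHS, hshrink]
end

section
/- Let L be an irreducible generator matrix with detailed balance with respect to positive π, with A, B disjoint nonempty subsets. Then the committor q (q=0 on A, q=1 on B, ∑_j L_{ij} q_j = 0 for i ∉ A∪B) satisfies 0 ≤ q_i ≤ 1 for all i (maximum principle for the committor). -/
/-!
A function that is harmonic for a generator at its global minimum takes the same value at every
state the minimum jumps to with positive rate, since `∑ⱼ L i j (f j - f i) = 0` is a sum of
nonnegative terms. Following a path of positive rates from a global minimizer of the committor to
`A ∪ B` therefore shows that `q` attains its minimum on `A ∪ B`, where it is `0` or `1`; the same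
argument applied to `-q` bounds the maximum.
-/

open Finset

section MinimumPrinciple

variable {ι : Type*} [Fintype ι] {L : Matrix ι ι ℝ}

lemma eq_of_forall_le_of_sum_mul_eq_zero (hoff : ∀ i j, i ≠ j → 0 ≤ L i j)
    (hrow : ∀ i, ∑ j, L i j = 0) {f : ι → ℝ} {i j : ι} (hmin : ∀ k, f i ≤ f k)
    (hharm : ∑ k, L i k * f k = 0) (hij : 0 < L i j) : f j = f i := by
  have hsum : ∑ k, L i k * (f k - f i) = 0 := by
    simp only [mul_sub, sum_sub_distrib, ← sum_mul, hharm, hrow, zero_mul, sub_zero]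
  have hnonneg : ∀ k ∈ univ, 0 ≤ L i k * (f k - f i) := by
    intro k _
    rcases eq_or_ne i k with rfl | hik
    · simp
    · exact mul_nonneg (hoff i k hik) (sub_nonneg.mpr (hmin k))
  have hj := (sum_eq_zero_iff_of_nonneg hnonneg).mp hsum j (mem_univ j)
  linarith [(mul_eq_zero.mp hj).resolve_left hij.ne']

lemma exists_mem_le_of_sum_mul_eq_zero (hoff : ∀ i j, i ≠ j → 0 ≤ L i j)
    (hrow : ∀ i, ∑ j, L i j = 0) {S : Set ι}
    (hreach : ∀ i, ∃ s ∈ S, Relation.ReflTransGen (fun a b => 0 < L a b) i s)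
    {f : ι → ℝ} (hharm : ∀ i ∉ S, ∑ j, L i j * f j = 0) (i : ι) :
    ∃ s ∈ S, f s ≤ f i := by
  obtain ⟨i₀, -, hmin⟩ := exists_min_image univ f ⟨i, mem_univ i⟩
  replace hmin : ∀ k, f i₀ ≤ f k := fun k => hmin k (mem_univ k)
  have hpath : ∀ j, Relation.ReflTransGen (fun a b => 0 < L a b) i₀ j →
      (∃ s ∈ S, f s ≤ f i₀) ∨ f j = f i₀ := by
    intro j hj
    induction hj with
    | refl => exact Or.inr rfl
    | @tail c b _ hcb ih =>
      refine ih.elim Or.inl fun hc => ?_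
      by_cases hcS : c ∈ S
      · exact Or.inl ⟨c, hcS, hc.le⟩
      · refine Or.inr ((eq_of_forall_le_of_sum_mul_eq_zero hoff hrow ?_ (hharm c hcS) hcb).trans hc)
        exact hc ▸ hmin
  obtain ⟨s, hsS, hs⟩ := hreach i₀
  rcases hpath s hs with ⟨t, htS, ht⟩ | hs_eq
  · exact ⟨t, htS, ht.trans (hmin i)⟩
  · exact ⟨s, hsS, hs_eq ▸ hmin i⟩

end MinimumPrinciple

theorem committor_maximum_principle_general
    (N : ℕ) (L : Matrix (Fin N) (Fin N) ℝ)
    (hoff : ∀ i j, i ≠ j → 0 ≤ L i j)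
    (hrow : ∀ i, ∑ j, L i j = 0)
    (hirr : ∀ i j : Fin N,
      Relation.ReflTransGen (fun a b => a ≠ b ∧ 0 < L a b) i j)
    (A B : Finset (Fin N)) (hA : A.Nonempty)
    (q : Fin N → ℝ)
    (hqA : ∀ i ∈ A, q i = 0) (hqB : ∀ i ∈ B, q i = 1)
    (hharm : ∀ i, i ∉ A → i ∉ B → ∑ j, L i j * q j = 0) :
    ∀ i, 0 ≤ q i ∧ q i ≤ 1 := by
  obtain ⟨a, ha⟩ := hA
  have hreach : ∀ i, ∃ s ∈ (↑(A ∪ B) : Set (Fin N)),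
      Relation.ReflTransGen (fun a b => 0 < L a b) i s := fun i =>
    ⟨a, by simp [ha], Relation.ReflTransGen.mono (fun _ _ h => h.2) _ _ (hirr i a)⟩
  have hharm' : ∀ i ∉ (↑(A ∪ B) : Set (Fin N)), ∑ j, L i j * q j = 0 := fun i hi => by
    simp only [coe_union, Set.mem_union, mem_coe, not_or] at hi
    exact hharm i hi.1 hi.2
  have hboundary : ∀ s ∈ (↑(A ∪ B) : Set (Fin N)), q s = 0 ∨ q s = 1 := fun s hs => by
    rcases mem_union.mp hs with hs | hs
    exacts [Or.inl (hqA s hs), Or.inr (hqB s hs)]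
  intro i
  constructor
  · obtain ⟨s, hs, hle⟩ := exists_mem_le_of_sum_mul_eq_zero hoff hrow hreach hharm' i
    rcases hboundary s hs with h | h <;> linarith
  · obtain ⟨s, hs, hle⟩ := exists_mem_le_of_sum_mul_eq_zero hoff hrow hreach
      (f := -q) (fun j hj => by simp [hharm' j hj]) i
    rcases hboundary s hs with h | h <;> simp only [Pi.neg_apply] at hle <;> linarith

/-- Maximum principle for the committor: for an irreducible generator matrix with
detailed balance, the committor `q` (with `q = 0` on `A`, `q = 1` on `B`, harmonic
elsewhere) satisfies `0 ≤ q i ≤ 1` for all states `i`. -/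
theorem committor_maximum_principle
    (N : ℕ) (L : Matrix (Fin N) (Fin N) ℝ) (π : Fin N → ℝ)
    (hπpos : ∀ i, 0 < π i) (hπsum : ∑ i, π i = 1)
    (hoff : ∀ i j, i ≠ j → 0 ≤ L i j)
    (hrow : ∀ i, ∑ j, L i j = 0)
    (hdb : ∀ i j, π i * L i j = π j * L j i)
    (hirr : ∀ i j : Fin N,
      Relation.ReflTransGen (fun a b => a ≠ b ∧ 0 < L a b) i j)
    (A B : Finset (Fin N)) (hA : A.Nonempty) (hB : B.Nonempty)
    (hAB : Disjoint A B)
    (q : Fin N → ℝ)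
    (hqA : ∀ i ∈ A, q i = 0) (hqB : ∀ i ∈ B, q i = 1)
    (hharm : ∀ i, i ∉ A → i ∉ B → ∑ j, L i j * q j = 0) :
    ∀ i, 0 ≤ q i ∧ q i ≤ 1 :=
  committor_maximum_principle_general N L hoff hrow hirr A B hA q hqA hqB hharm
end
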